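/- Let φ(u) = e^u - 1 and f(x) = ln(x^{-1/2}) on (0,1], f(0)=0, extended 1-periodically. Then for every t ∈ (0, 1/2], ∫_t^1 φ(|f(z) - f(z-t)|) dz = ∫_t^1 (√(z/(z-t)) - 1) dz ≤ C t^ν for a suitable constant C > 0 and any 0 < ν < 1 (for t small). -/

import Mathlib

open Filter MeasureTheory

/-- `f(x) = ln(x^{-1/2})` on `(0,1]`, `f(0) = 0`, extended `1`-periodically to `ℝ`. -/
noncomputable def fLog (x : ℝ) : ℝ :=
  if Int.fract x = 0 then 0 else -(1 / 2) * Real.log (Int.fract x)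

lemma fLog_eq {x : ℝ} (hx0 : 0 < x) (hx1 : x ≤ 1) : fLog x = -(1 / 2) * Real.log x := by
  rcases eq_or_lt_of_le hx1 with h | h
  · subst h
    simp [fLog, Int.fract_one]
  · rw [fLog, Int.fract_eq_self.2 ⟨hx0.le, h⟩, if_neg hx0.ne']

lemma integrand_eq {t : ℝ} (ht : 0 < t) {z : ℝ} (hz1 : t < z) (hz2 : z ≤ 1) :
    Real.exp |fLog z - fLog (z - t)| - 1 = Real.sqrt (z / (z - t)) - 1 := by
  have hzt : 0 < z - t := by linarith
  have hz0 : 0 < z := ht.trans hz1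
  have h1 : fLog (z - t) = -(1 / 2) * Real.log (z - t) := fLog_eq hzt (by linarith)
  have h2 : fLog z = -(1 / 2) * Real.log z := fLog_eq hz0 hz2
  have hr : 0 < z / (z - t) := div_pos hz0 hzt
  have hlog : Real.log (z - t) ≤ Real.log z := Real.log_le_log hzt (by linarith)
  have key : fLog z - fLog (z - t) = -((1 / 2) * (Real.log z - Real.log (z - t))) := by
    rw [h1, h2]; ring
  have habs : |fLog z - fLog (z - t)| = (1 / 2) * Real.log (z / (z - t)) := by
    rw [key, abs_neg, abs_of_nonneg (by linarith), Real.log_div hz0.ne' hzt.ne']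
  rw [habs]
  congr 1
  rw [Real.sqrt_eq_rpow, Real.rpow_def_of_pos hr]
  ring_nf

/-- with `φ(u) = e^u - 1`, for every `0 < ν < 1` there is `C > 0` such that
`∫_t^1 φ(|f(z) - f(z-t)|) dz = ∫_t^1 (√(z/(z-t)) - 1) dz ≤ C t^ν` for `t` small. -/
theorem stmt_15 :
    ∀ ν : ℝ, 0 < ν → ν < 1 →
      ∃ C : ℝ, 0 < C ∧ ∃ t₀ : ℝ, 0 < t₀ ∧
        ∀ t : ℝ, 0 < t → t ≤ t₀ → t ≤ 1 / 2 →
          (∫ z in t..1, (Real.exp |fLog z - fLog (z - t)| - 1)) =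
              (∫ z in t..1, (Real.sqrt (z / (z - t)) - 1)) ∧
            (∫ z in t..1, (Real.sqrt (z / (z - t)) - 1)) ≤ C * t ^ ν := by
  intro ν hν0 hν1
  have hε : (0:ℝ) < 1 - ν := by linarith
  refine ⟨4 + 2 / (1 - ν), by positivity, 1 / 2, by norm_num, ?_⟩
  intro t ht _ ht2
  have ht1 : t < 1 := by linarith
  have hst : 0 < Real.sqrt t := Real.sqrt_pos.2 ht
  constructor
  · -- equality of the two integrals
    apply intervalIntegral.integral_congr_ae
    filter_upwards with z hz
    rw [Set.uIoc_of_le (by linarith : t ≤ 1)] at hz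
    exact integrand_eq ht hz.1 hz.2
  · -- the bound
    set g : ℝ → ℝ := fun z => Real.sqrt (z / (z - t)) - 1 with hg
    have g_nonneg : ∀ z, t < z → 0 ≤ g z := by
      intro z hz
      have hzt : 0 < z - t := by linarith
      have : (1:ℝ) ≤ z / (z - t) := (one_le_div hzt).2 (by linarith)
      simp only [hg, sub_nonneg, Real.one_le_sqrt]
      linarith
    -- dominating function on [t, 2t]
    set h : ℝ → ℝ := fun z => 2 * Real.sqrt t * (z - t) ^ (-(1/2) : ℝ) with hh
    have h_nonneg : ∀ z, t ≤ z → 0 ≤ h z := by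
      intro z hz
      have hzt : (0:ℝ) ≤ z - t := by linarith
      have h1 : (0:ℝ) ≤ (z - t) ^ (-(1/2) : ℝ) := Real.rpow_nonneg hzt _
      simp only [hh]
      positivity
    have h_eq : ∀ z, t ≤ z → h z = 2 * Real.sqrt t / Real.sqrt (z - t) := by
      intro z hz
      have hzt : (0:ℝ) ≤ z - t := by linarith
      simp only [hh]
      rw [Real.rpow_neg hzt, ← Real.sqrt_eq_rpow, div_eq_mul_inv]
    have g_le_h : ∀ z, t < z → z ≤ 2 * t → g z ≤ h z := by
      intro z hz hz2
      have hzt : 0 < z - t := by linarith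
      have hz0 : 0 < z := ht.trans hz
      have hszt : 0 < Real.sqrt (z - t) := Real.sqrt_pos.2 hzt
      have e1 : Real.sqrt (z / (z - t)) = Real.sqrt z / Real.sqrt (z - t) :=
        Real.sqrt_div hz0.le _
      have e2 : Real.sqrt z ≤ 2 * Real.sqrt t := by
        have s2 : Real.sqrt 2 ≤ 2 := by
          nlinarith [Real.sq_sqrt (by norm_num : (0:ℝ) ≤ 2), Real.sqrt_nonneg 2]
        calc Real.sqrt z ≤ Real.sqrt (2 * t) := Real.sqrt_le_sqrt hz2
          _ = Real.sqrt 2 * Real.sqrt t := Real.sqrt_mul (by norm_num) t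
          _ ≤ 2 * Real.sqrt t := by nlinarith [Real.sqrt_nonneg t]
      calc g z ≤ Real.sqrt z / Real.sqrt (z - t) := by
            simp only [hg]; rw [e1]; linarith
        _ ≤ 2 * Real.sqrt t / Real.sqrt (z - t) := by gcongr
        _ = h z := (h_eq z hz.le).symm
    -- bound on [2t, 1]
    have g_le_inv : ∀ z, 2 * t ≤ z → g z ≤ 2 * t * (1 / z) := by
      intro z hz
      have hz0 : 0 < z := by linarith
      have hzt : 0 < z - t := by linarith
      have hr1 : (1:ℝ) ≤ z / (z - t) := (one_le_div hzt).2 (by linarith)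
      have sle : Real.sqrt (z / (z - t)) ≤ z / (z - t) := by
        nlinarith [Real.sq_sqrt (by positivity : (0:ℝ) ≤ z / (z - t)),
          Real.one_le_sqrt.2 hr1, Real.sqrt_nonneg (z / (z - t))]
      have : z / (z - t) - 1 = t / (z - t) := by field_simp; ring
      have htz : t / (z - t) ≤ 2 * t / z := by
        rw [div_le_div_iff₀ hzt hz0]
        nlinarith
      simp only [hg]
      calc Real.sqrt (z / (z - t)) - 1 ≤ z / (z - t) - 1 := by linarith
        _ = t / (z - t) := this
        _ ≤ 2 * t / z := htz
        _ = 2 * t * (1 / z) := by ring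
    -- integrability
    have hInth : IntervalIntegrable h volume t (2 * t) := by
      have base : IntervalIntegrable (fun x : ℝ => x ^ (-(1/2) : ℝ)) volume 0 t :=
        intervalIntegral.intervalIntegrable_rpow' (by norm_num)
      have := (base.comp_sub_right t).const_mul (2 * Real.sqrt t)
      simpa [hh, two_mul] using this
    have hInt1 : IntervalIntegrable g volume t (2 * t) := by
      apply hInth.mono_fun
      · apply Measurable.aestronglyMeasurable
        have : Measurable g := by
          simp only [hg]
          fun_prop
        exact this
      · rw [Filter.EventuallyLE, ae_restrict_iff' measurableSet_uIoc]
        filter_upwards with z hz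
        rw [Set.uIoc_of_le (by linarith : t ≤ 2 * t)] at hz
        have h1 := g_nonneg z hz.1
        have h2 := g_le_h z hz.1 hz.2
        simp only [Real.norm_eq_abs, abs_of_nonneg h1, abs_of_nonneg (h_nonneg z hz.1.le)]
        exact h2
    have hcont2 : ContinuousOn g (Set.uIcc (2 * t) 1) := by
      have huIcc : Set.uIcc (2 * t) 1 = Set.Icc (2 * t) 1 := Set.uIcc_of_le (by linarith)
      apply ContinuousOn.sub _ continuousOn_const
      apply Real.continuous_sqrt.comp_continuousOn
      apply ContinuousOn.div continuousOn_id
      · exact (continuous_id.sub continuous_const).continuousOn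
      · intro z hz
        rw [huIcc] at hz
        have : 2 * t ≤ z := hz.1
        intro hzero
        have : z = t := by linarith [sub_eq_zero.mp hzero]
        linarith
    have hInt2 : IntervalIntegrable g volume (2 * t) 1 := hcont2.intervalIntegrable
    have hcontq : ContinuousOn (fun z : ℝ => 2 * t * (1 / z)) (Set.uIcc (2 * t) 1) := by
      have huIcc : Set.uIcc (2 * t) 1 = Set.Icc (2 * t) 1 := Set.uIcc_of_le (by linarith)
      apply ContinuousOn.mul continuousOn_const
      apply ContinuousOn.div continuousOn_const continuousOn_id
      intro z hz
      rw [huIcc] at hz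
      have : 2 * t ≤ z := hz.1
      intro hzero; simp only [id] at hzero; linarith
    have hIntq : IntervalIntegrable (fun z : ℝ => 2 * t * (1 / z)) volume (2 * t) 1 :=
      hcontq.intervalIntegrable
    -- split
    have hsplit : (∫ z in t..1, g z) = (∫ z in t..(2*t), g z) + ∫ z in (2*t)..1, g z :=
      (intervalIntegral.integral_add_adjacent_intervals hInt1 hInt2).symm
    -- bound piece 1
    have hb1 : (∫ z in t..(2*t), g z) ≤ ∫ z in t..(2*t), h z := by
      apply intervalIntegral.integral_mono_on (by linarith) hInt1 hInth
      intro z hz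
      rcases eq_or_lt_of_le hz.1 with heq | hlt
      · have hgz : g t = -1 := by simp [hg]
        rw [← heq, hgz]
        linarith [h_nonneg t le_rfl]
      · exact g_le_h z hlt hz.2
    have hval1 : (∫ z in t..(2*t), h z) = 4 * t := by
      have e : (∫ z in t..(2*t), (z - t) ^ (-(1/2) : ℝ)) = 2 * t ^ ((1:ℝ)/2) := by
        rw [intervalIntegral.integral_comp_sub_right (fun x : ℝ => x ^ (-(1/2) : ℝ)) t]
        rw [show t - t = (0:ℝ) by ring, show 2 * t - t = t by ring]
        rw [integral_rpow (Or.inl (by norm_num))]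
        rw [Real.zero_rpow (by norm_num)]
        norm_num
        ring
      calc (∫ z in t..(2*t), h z)
          = 2 * Real.sqrt t * ∫ z in t..(2*t), (z - t) ^ (-(1/2) : ℝ) := by
            simp only [hh]
            rw [← intervalIntegral.integral_const_mul]
        _ = 2 * Real.sqrt t * (2 * t ^ ((1:ℝ)/2)) := by rw [e]
        _ = 4 * (Real.sqrt t * Real.sqrt t) := by
            rw [← Real.sqrt_eq_rpow]; ring
        _ = 4 * t := by rw [Real.mul_self_sqrt ht.le]
    -- bound piece 2
    have hb2 : (∫ z in (2*t)..1, g z) ≤ 2 * t * Real.log (1 / (2*t)) := by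
      have : (∫ z in (2*t)..1, g z) ≤ ∫ z in (2*t)..1, 2 * t * (1 / z) := by
        apply intervalIntegral.integral_mono_on (by linarith) hInt2 hIntq
        intro z hz
        exact g_le_inv z hz.1
      have hval : (∫ z in (2*t)..1, 2 * t * (1 / z)) = 2 * t * Real.log (1 / (2*t)) := by
        rw [intervalIntegral.integral_const_mul, integral_one_div]
        intro hmem
        rw [Set.uIcc_of_le (by linarith : 2*t ≤ 1)] at hmem
        linarith [hmem.1]
      linarith
    -- final estimates
    have htν : t ≤ t ^ ν := by
      calc t = t ^ (1:ℝ) := (Real.rpow_one t).symm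
        _ ≤ t ^ ν := Real.rpow_le_rpow_of_exponent_ge ht (by linarith) hν1.le
    have hlog2 : Real.log (1 / (2*t)) ≤ t ^ (-(1-ν)) / (1 - ν) := by
      have h1 : Real.log (1 / (2*t)) ≤ -Real.log t := by
        rw [Real.log_div one_ne_zero (by positivity), Real.log_one]
        have : Real.log t ≤ Real.log (2*t) := Real.log_le_log ht (by linarith)
        linarith
      have h2 : -Real.log t ≤ t ^ (-(1-ν)) / (1 - ν) := by
        have hr : Real.log (t ^ (-(1-ν))) = -(1-ν) * Real.log t := Real.log_rpow ht _
        have h3 : Real.log (t ^ (-(1-ν))) ≤ t ^ (-(1-ν)) := by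
          have := Real.log_le_sub_one_of_pos (x := t ^ (-(1-ν))) (by positivity)
          linarith
        rw [hr] at h3
        rw [le_div_iff₀ hε]
        nlinarith
      linarith
    have hpow : t * t ^ (-(1-ν)) = t ^ ν := by
      calc t * t ^ (-(1-ν)) = t ^ (1:ℝ) * t ^ (-(1-ν)) := by rw [Real.rpow_one]
        _ = t ^ ((1:ℝ) + -(1-ν)) := (Real.rpow_add ht _ _).symm
        _ = t ^ ν := by norm_num
    have hlogpos : 0 ≤ Real.log (1 / (2*t)) := by
      apply Real.log_nonneg
      rw [le_div_iff₀ (by positivity)]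
      linarith
    have key : 2 * t * Real.log (1 / (2*t)) ≤ 2 / (1 - ν) * t ^ ν := by
      calc 2 * t * Real.log (1 / (2*t)) ≤ 2 * t * (t ^ (-(1-ν)) / (1 - ν)) := by
            apply mul_le_mul_of_nonneg_left hlog2 (by positivity)
        _ = 2 / (1 - ν) * (t * t ^ (-(1-ν))) := by ring
        _ = 2 / (1 - ν) * t ^ ν := by rw [hpow]
    calc (∫ z in t..1, g z) = (∫ z in t..(2*t), g z) + ∫ z in (2*t)..1, g z := hsplit
      _ ≤ 4 * t + 2 * t * Real.log (1 / (2*t)) := by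
          rw [← hval1]; exact add_le_add hb1 hb2
      _ ≤ 4 * t ^ ν + 2 / (1 - ν) * t ^ ν := by
          have : 4 * t ≤ 4 * t ^ ν := by linarith
          linarith
      _ = (4 + 2 / (1 - ν)) * t ^ ν := by ring
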